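/- In the stability setting, the sequence of regularisation values at minimisers R_{k₀}(x^(l)) is uniformly bounded for any index k₀ with α_{k₀} > 0, where α = lim α^(l). -/

import Mathlib

open Filter Topology
open scoped ENNReal

/-- Convergence of a sequence in `Y` with respect to the topology `σ` induced by the
pseudo-metrics `d^(z)(y,ỹ) = |S(z,y) − S(z,ỹ)|`: `y^(l) → p` iff `S(z, y^(l)) → S(z,p)`
for every `z ∈ Y`. -/
def SigmaTendsto {Y : Type*} (S : Y → Y → ℝ) (y : ℕ → Y) (p : Y) : Prop :=
  ∀ z : Y, Tendsto (fun l => S z (y l)) atTop (nhds (S z p))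

/-- Sequential compactness of a subset of `Y` with respect to the topology `σ`. -/
def SeqCompactSigma {Y : Type*} (S : Y → Y → ℝ) (L : Set Y) : Prop :=
  ∀ y : ℕ → Y, (∀ l, y l ∈ L) →
    ∃ p ∈ L, ∃ φ : ℕ → ℕ, StrictMono φ ∧ SigmaTendsto S (fun l => y (φ l)) p

/-- Sequential lower semi-continuity of `(x,y) ↦ S(F(x),y)` with respect to `τ × σ`. -/
def SeqLSCop {X Y : Type*} [TopologicalSpace X] (S : Y → Y → ℝ) (F : X → Y) : Prop :=
  ∀ (x : ℕ → X) (x₀ : X) (y : ℕ → Y) (y₀ : Y),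
    Tendsto x atTop (nhds x₀) → SigmaTendsto S y y₀ →
      S (F x₀) y₀ ≤ liminf (fun l => S (F (x l)) (y l)) atTop

/-- The pseudo-metric `d_{K,L}(F,G) = sup {|S(F(x),z) − S(G(x),z)| : x ∈ K, z ∈ L}`
(with values in `[0,∞]`). -/
noncomputable def dKL {X Y : Type*} (S : Y → Y → ℝ) (K : Set X) (L : Set Y)
    (F G : X → Y) : ℝ≥0∞ :=
  ⨆ x ∈ K, ⨆ z ∈ L, ENNReal.ofReal |S (F x) z - S (G x) z|

/-- Convergence of operators `F^(l) → F` with respect to `τ`: `d_{K,L}(F^(l),F) → 0`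
for every sequentially `τ`-compact `K ⊆ X` and sequentially `σ`-compact `L ⊆ Y`. -/
def OpTendsto {X Y : Type*} [TopologicalSpace X] (S : Y → Y → ℝ)
    (F' : ℕ → X → Y) (F : X → Y) : Prop :=
  ∀ (K : Set X) (L : Set Y), IsSeqCompact K → SeqCompactSigma S L →
    Tendsto (fun l => dKL S K L (F' l) F) atTop (nhds 0)
/-- Sequential `τ`-coercivity: every sequence on which `R` is (finitely) bounded has a
`τ`-convergent subsequence. -/
def SeqCoercive {X : Type*} [TopologicalSpace X] (R : X → ℝ≥0∞) : Prop :=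
  ∀ (u : ℕ → X) (c : ℝ≥0∞), c ≠ ⊤ → (∀ l, R (u l) ≤ c) →
    ∃ (x : X) (φ : ℕ → ℕ), StrictMono φ ∧ Tendsto (fun l => u (φ l)) atTop (nhds x)

/-- Sequential `τ`-lower semi-continuity of `R : X → [0,∞]`. -/
def SeqLSC {X : Type*} [TopologicalSpace X] (R : X → ℝ≥0∞) : Prop :=
  ∀ (u : ℕ → X) (x : X), Tendsto u atTop (nhds x) →
    R x ≤ liminf (fun l => R (u l)) atTop

/-- The class `F(τ)`: `(x,y) ↦ S(F(x),y)` is sequentially `(τ×σ)`-lower semi-continuous and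
the joint domain `D` of the regularisation terms is dense in the required sense. -/
def MemFtau {X Y : Type*} [TopologicalSpace X] {n : ℕ} (S : Y → Y → ℝ)
    (R : Fin n → X → ℝ≥0∞) (F : X → Y) : Prop :=
  SeqLSCop S F ∧
  ∀ (x : X) (y : Y), ∃ u : ℕ → X,
    (∀ l k, R k (u l) ≠ ⊤) ∧
    Tendsto u atTop (nhds x) ∧
    (∀ k, Tendsto (fun l => R k (u l)) atTop (nhds (R k x))) ∧
    Tendsto (fun l => S (F (u l)) y) atTop (nhds (S (F x) y))

/-- The multi-parameter Tikhonov functional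
`T(x; α, y, F) = S(F(x),y) + Σ_k α_k R_k(x)`, with the convention `α_k R_k(x) = 0` when
`α_k = 0` and `R_k(x) = ∞`. -/
noncomputable def Tik {X Y : Type*} {n : ℕ} (S : Y → Y → ℝ) (R : Fin n → X → ℝ≥0∞)
    (α : Fin n → ℝ) (y : Y) (F : X → Y) (x : X) : ℝ≥0∞ :=
  ENNReal.ofReal (S (F x) y) + ∑ k, ENNReal.ofReal (α k) * R k x

/-!
Compare each minimiser with a point `x₀` at which every `R_k` is finite:
`T(x^(l); α^(l), y^(l), F^(l)) ≤ T(x₀; α^(l), y^(l), F^(l))`. Taking `K = {x₀}` and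
`L = {y^δ} ∪ {y^(l)}` (sequentially `σ`-compact) in the `d_{K,L}`-convergence gives
`S(F^(l)(x₀), y^(l)) → S(F^δ(x₀), y^δ)`, so the right-hand side converges to the finite value
`T(x₀; α, y^δ, F^δ)`. Since eventually `α^(l)_{k₀} ≥ α_{k₀}/2 > 0`, this bounds `R_{k₀}(x^(l))`.
-/
section Sigma

variable {Y : Type*} {S : Y → Y → ℝ} {y : ℕ → Y} {p : Y}

theorem SigmaTendsto.seqCompactSigma_insert_range (hy : SigmaTendsto S y p) :
    SeqCompactSigma S (insert p (Set.range y)) := by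
  intro u hu
  -- `ŷ` maps the compact `OnePoint ℕ` onto the set, and every `S z ∘ ŷ` is continuous
  let ŷ : OnePoint ℕ → Y := fun m => m.elim p y
  have hindex : ∀ l, ∃ m, u l = ŷ m := fun l => by
    rcases hu l with h | ⟨k, hk⟩
    · exact ⟨OnePoint.infty, h⟩
    · exact ⟨k, hk.symm⟩
  choose g hg using hindex
  obtain ⟨m, -, φ, hφ, hgφ⟩ := isCompact_univ.tendsto_subseq fun l => Set.mem_univ (g l)
  refine ⟨ŷ m, ?_, φ, hφ, fun z => ?_⟩
  · induction m using OnePoint.rec with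
    | infty => exact Set.mem_insert _ _
    | coe k => exact Set.mem_insert_of_mem _ ⟨k, rfl⟩
  · have hcont : Continuous fun m => S z (ŷ m) := (OnePoint.continuous_iff_from_nat _).2 (hy z)
    simpa only [Function.comp_def, hg] using (hcont.tendsto m).comp hgφ

end Sigma

theorem isSeqCompact_singleton {X : Type*} [TopologicalSpace X] (x : X) :
    IsSeqCompact ({x} : Set X) := fun u hu =>
  ⟨x, rfl, id, strictMono_id, by
    rw [show u ∘ id = fun _ => x from funext hu]
    exact tendsto_const_nhds⟩

section Operator

variable {X Y : Type*} {S : Y → Y → ℝ}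

theorem ofReal_abs_sub_le_dKL {K : Set X} {L : Set Y} {F G : X → Y} {x : X} {z : Y}
    (hx : x ∈ K) (hz : z ∈ L) :
    ENNReal.ofReal |S (F x) z - S (G x) z| ≤ dKL S K L F G :=
  calc ENNReal.ofReal |S (F x) z - S (G x) z|
      ≤ ⨆ z ∈ L, ENNReal.ofReal |S (F x) z - S (G x) z| :=
        le_biSup (fun z => ENNReal.ofReal |S (F x) z - S (G x) z|) hz
    _ ≤ dKL S K L F G :=
        le_biSup (fun x => ⨆ z ∈ L, ENNReal.ofReal |S (F x) z - S (G x) z|) hx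

theorem OpTendsto.tendsto_apply_of_sigmaTendsto [TopologicalSpace X] {F' : ℕ → X → Y}
    {F : X → Y} {y : ℕ → Y} {p : Y} (hop : OpTendsto S F' F) (hy : SigmaTendsto S y p)
    (x : X) : Tendsto (fun l => S (F' l x) (y l)) atTop (𝓝 (S (F x) p)) := by
  have hdKL := hop {x} _ (isSeqCompact_singleton x) hy.seqCompactSigma_insert_range
  have hofReal : Tendsto (fun l => ENNReal.ofReal |S (F' l x) (y l) - S (F x) (y l)|)
      atTop (𝓝 0) :=
    tendsto_of_tendsto_of_tendsto_of_le_of_le tendsto_const_nhds hdKL (fun _ => zero_le)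
      fun l => ofReal_abs_sub_le_dKL rfl (Set.mem_insert_of_mem _ ⟨l, rfl⟩)
  have habs : Tendsto (fun l => |S (F' l x) (y l) - S (F x) (y l)|) atTop (𝓝 0) := by
    simpa only [Function.comp_def, ENNReal.toReal_ofReal (abs_nonneg _), ENNReal.toReal_zero]
      using (ENNReal.tendsto_toReal ENNReal.zero_ne_top).comp hofReal
  simpa using (tendsto_zero_iff_abs_tendsto_zero _).2 habs |>.add (hy (F x))

end Operator

section Tikhonov

variable {X Y ι : Type*} {n : ℕ} {S : Y → Y → ℝ} {R : Fin n → X → ℝ≥0∞}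

theorem ofReal_mul_le_tik (α : Fin n → ℝ) (y : Y) (F : X → Y) (x : X) (k : Fin n) :
    ENNReal.ofReal (α k) * R k x ≤ Tik S R α y F x :=
  (Finset.single_le_sum (f := fun k => ENNReal.ofReal (α k) * R k x)
    (fun _ _ => zero_le) (Finset.mem_univ k)).trans le_add_self

theorem tik_ne_top {x : X} (hx : ∀ k, R k x ≠ ⊤) (α : Fin n → ℝ) (y : Y) (F : X → Y) :
    Tik S R α y F x ≠ ⊤ :=
  ENNReal.add_ne_top.2 ⟨ENNReal.ofReal_ne_top, ENNReal.sum_ne_top.2 fun k _ =>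
    ENNReal.mul_ne_top ENNReal.ofReal_ne_top (hx k)⟩

theorem tendsto_tik {f : Filter ι} {α' : ι → Fin n → ℝ} {α : Fin n → ℝ} {y' : ι → Y} {y : Y}
    {F' : ι → X → Y} {F : X → Y} {x : X} (hx : ∀ k, R k x ≠ ⊤)
    (hα : ∀ k, Tendsto (fun i => α' i k) f (𝓝 (α k)))
    (hS : Tendsto (fun i => S (F' i x) (y' i)) f (𝓝 (S (F x) y))) :
    Tendsto (fun i => Tik S R (α' i) (y' i) (F' i) x) f (𝓝 (Tik S R α y F x)) :=
  (ENNReal.tendsto_ofReal hS).add <| tendsto_finsetSum _ fun k _ =>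
    ENNReal.Tendsto.mul_const (ENNReal.tendsto_ofReal (hα k)) (Or.inr (hx k))

end Tikhonov

theorem stability_uniform_bound_general {X Y : Type*} [TopologicalSpace X] {n : ℕ}
    (S : Y → Y → ℝ)
    (R : Fin n → X → ℝ≥0∞)
    (hD : ∃ x₀ : X, ∀ k, R k x₀ ≠ ⊤)
    (yδ : Y) (y' : ℕ → Y) (hy : SigmaTendsto S y' yδ)
    (Fδ : X → Y) (F' : ℕ → X → Y)
    (hop : OpTendsto S F' Fδ)
    (α : Fin n → ℝ)
    (k₀ : Fin n) (hk₀ : 0 < α k₀)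
    (α' : ℕ → Fin n → ℝ)
    (hαconv : ∀ k, Tendsto (fun l => α' l k) atTop (nhds (α k)))
    (x' : ℕ → X)
    (hmin : ∀ l x, Tik S R (α' l) (y' l) (F' l) (x' l) ≤ Tik S R (α' l) (y' l) (F' l) x) :
    ∃ C : ℝ≥0∞, C ≠ ⊤ ∧ ∀ᶠ l in atTop, R k₀ (x' l) ≤ C := by
  obtain ⟨x₀, hx₀⟩ := hD
  set T₀ := Tik S R α yδ Fδ x₀
  have hT₀ : T₀ ≠ ⊤ := tik_ne_top hx₀ α yδ Fδ
  have hcompare : ∀ᶠ l in atTop, Tik S R (α' l) (y' l) (F' l) x₀ < T₀ + 1 :=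
    (tendsto_tik hx₀ hαconv (hop.tendsto_apply_of_sigmaTendsto hy x₀)).eventually
      (gt_mem_nhds (ENNReal.lt_add_right hT₀ one_ne_zero))
  have hweight : ∀ᶠ l in atTop, α k₀ / 2 ≤ α' l k₀ :=
    (hαconv k₀).eventually_const_le (half_lt_self hk₀)
  have hc : ENNReal.ofReal (α k₀ / 2) ≠ 0 := (ENNReal.ofReal_pos.2 (half_pos hk₀)).ne'
  refine ⟨(T₀ + 1) / ENNReal.ofReal (α k₀ / 2),
    ENNReal.div_ne_top (ENNReal.add_ne_top.2 ⟨hT₀, ENNReal.one_ne_top⟩) hc, ?_⟩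
  filter_upwards [hcompare, hweight] with l hT hα
  rw [ENNReal.le_div_iff_mul_le (Or.inl hc) (Or.inl ENNReal.ofReal_ne_top), mul_comm]
  calc ENNReal.ofReal (α k₀ / 2) * R k₀ (x' l)
      ≤ ENNReal.ofReal (α' l k₀) * R k₀ (x' l) := by gcongr
    _ ≤ Tik S R (α' l) (y' l) (F' l) (x' l) := ofReal_mul_le_tik _ _ _ _ k₀
    _ ≤ Tik S R (α' l) (y' l) (F' l) x₀ := hmin l x₀
    _ ≤ T₀ + 1 := hT.le

/-- in the stability setting, the regularisation values `R_{k₀}(x^(l))` at the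
minimisers are uniformly bounded (by a finite constant) for any index `k₀` with
`α_{k₀} > 0`, where `α = lim α^(l)`. -/
theorem stability_uniform_bound {X Y : Type*} [TopologicalSpace X] {n : ℕ}
    (S : Y → Y → ℝ) (hS0 : ∀ y z : Y, 0 ≤ S y z) (hSdef : ∀ y z : Y, S y z = 0 ↔ y = z)
    (R : Fin n → X → ℝ≥0∞)
    (hcoer : ∀ k, SeqCoercive (R k)) (hlsc : ∀ k, SeqLSC (R k))
    (hD : ∃ x₀ : X, ∀ k, R k x₀ ≠ ⊤)
    (yδ : Y) (y' : ℕ → Y) (hy : SigmaTendsto S y' yδ)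
    (Fδ : X → Y) (F' : ℕ → X → Y)
    (hFδ : MemFtau S R Fδ) (hF' : ∀ l, MemFtau S R (F' l))
    (hop : OpTendsto S F' Fδ)
    (α : Fin n → ℝ) (hα : ∀ k, 0 ≤ α k)
    (k₀ : Fin n) (hk₀ : 0 < α k₀)
    (α' : ℕ → Fin n → ℝ) (hα' : ∀ l k, 0 ≤ α' l k)
    (hαconv : ∀ k, Tendsto (fun l => α' l k) atTop (nhds (α k)))
    (x' : ℕ → X)
    (hmin : ∀ l x, Tik S R (α' l) (y' l) (F' l) (x' l) ≤ Tik S R (α' l) (y' l) (F' l) x) :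
    ∃ C : ℝ≥0∞, C ≠ ⊤ ∧ ∀ᶠ l in atTop, R k₀ (x' l) ≤ C :=
  stability_uniform_bound_general S R hD yδ y' hy Fδ F' hop α k₀ hk₀ α' hαconv x' hmin
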